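/- arXiv:2003.00488 — 3 statements merged into one kernel-verified Lean document; each statement's English description precedes it below -/
import Mathlib

section
/- For every rooted tree t with pairwise distinct leaf labels, every set S of labels, and every vertex v of t, the counter satisfies counter_S(v) ≤ |S ∩ L(v)|. -/
inductive RTree (α : Type*) where
  | leaf (a : α)
  | node (children : List (RTree α))

namespace RTree

variable {α : Type*} [DecidableEq α]

/-- The list of leaf labels of a tree. -/
def leafList : RTree α → List α
  | leaf a => [a]
  | node cs => (cs.attach.map fun ⟨w, _⟩ => leafList w).flatten
decreasing_by have := List.sizeOf_lt_of_mem ‹_›; simp only [node.sizeOf_spec]; omega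

/-- `L v` is the finite set of labels of leaves in the subtree rooted at `v`. -/
def L (v : RTree α) : Finset α := (leafList v).toFinset

/-- The counter function. -/
def counter (S : Finset α) : RTree α → ℕ
  | leaf a => if a ∈ S then 1 else 0
  | node cs =>
      (cs.attach.map fun ⟨w, _⟩ =>
        if counter S w = (L w).card then counter S w else 0).sum
decreasing_by have := List.sizeOf_lt_of_mem ‹_›; simp only [node.sizeOf_spec]; omega

/-- `IsVertex v t` means that `v` is a vertex (subtree) of `t`. -/
inductive IsVertex : RTree α → RTree α → Prop
  | refl (t : RTree α) : IsVertex t t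
  | child {v w : RTree α} {cs : List (RTree α)} : w ∈ cs → IsVertex v w → IsVertex v (node cs)

/-- The list of all vertices (subtrees) of a tree. -/
def vertexList : RTree α → List (RTree α)
  | leaf a => [leaf a]
  | node cs => node cs :: (cs.attach.map fun ⟨w, _⟩ => vertexList w).flatten
decreasing_by have := List.sizeOf_lt_of_mem ‹_›; simp only [node.sizeOf_spec]; omega


lemma counter_le_countP (S : Finset α) : ∀ v : RTree α,
    counter S v ≤ (leafList v).countP (fun a => a ∈ S)
  | leaf a => by rw [counter, leafList]; by_cases h : a ∈ S <;> simp [h]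
  | node cs => by
      rw [counter, leafList, List.countP_flatten, List.map_map]
      apply List.sum_le_sum
      rintro ⟨w, hw⟩ -
      have := counter_le_countP S w
      dsimp only [Function.comp]
      split <;> omega
decreasing_by have := List.sizeOf_lt_of_mem hw; simp only [node.sizeOf_spec]; omega

lemma nodup_leafList_of_isVertex {v t : RTree α} (hv : IsVertex v t)
    (hnd : t.leafList.Nodup) : v.leafList.Nodup := by
  induction hv with
  | refl => exact hnd
  | @child w cs hw _ ih =>
      apply ih
      simp only [leafList, List.nodup_flatten] at hnd
      exact hnd.1 _ (List.mem_map.2 ⟨⟨w, hw⟩, List.mem_attach _ _, rfl⟩)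

lemma countP_eq_card_inter {v : RTree α} (hnd : v.leafList.Nodup) (S : Finset α) :
    (leafList v).countP (fun a => a ∈ S) = (S ∩ L v).card := by
  have h : S ∩ L v = ((leafList v).filter (fun a => a ∈ S)).toFinset := by
    ext a; simp [L, and_comm]
  rw [h, List.toFinset_card_of_nodup (hnd.filter _), List.countP_eq_length_filter]

/-- For every rooted tree `t` with pairwise distinct leaf labels, every set `S`
of labels, and every vertex `v` of `t`, `counter_S(v) ≤ |S ∩ L(v)|`. -/
theorem counter_le_card_inter (t : RTree α) (hnd : t.leafList.Nodup)
    (S : Finset α) (v : RTree α) (hv : IsVertex v t) :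
    counter S v ≤ (S ∩ L v).card := by
  rw [← countP_eq_card_inter (nodup_leafList_of_isVertex hv hnd)]
  exact counter_le_countP S v

end RTree
end

section
/- For every rooted tree t with pairwise distinct leaf labels, every set S of labels, and every vertex v of t, if L(v) ⊆ S then counter_S(v) = |L(v)| (equivalently, counter_S(v) = |S ∩ L(v)|), i.e. the counter attains its maximum on vertices whose whole leaf set is contained in S. -/
namespace RTree

variable {α : Type*} [DecidableEq α]

omit [DecidableEq α] in
lemma leafList_sub {w : RTree α} {cs : List (RTree α)} (hw : w ∈ cs) :
    w.leafList ⊆ (node cs).leafList := by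
  rw [leafList]
  intro a ha
  simp only [List.mem_flatten, List.mem_map, List.mem_attach]
  exact ⟨w.leafList, ⟨⟨w, hw⟩, trivial, rfl⟩, ha⟩

omit [DecidableEq α] in
lemma nodup_child {w : RTree α} {cs : List (RTree α)} (hw : w ∈ cs)
    (hnd : (node cs).leafList.Nodup) : w.leafList.Nodup := by
  rw [leafList, List.nodup_flatten] at hnd
  exact hnd.1 _ (List.mem_map.2 ⟨⟨w, hw⟩, List.mem_attach _ _, rfl⟩)

theorem counter_eq_card_aux (S : Finset α) : ∀ v : RTree α, v.leafList.Nodup → L v ⊆ S →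
    counter S v = (L v).card
  | leaf a, hnd, hsub => by
    have : a ∈ S := hsub (by simp [L, leafList])
    simp [counter, L, leafList, this]
  | node cs, hnd, hsub => by
    have key : ∀ w (hw : w ∈ cs), counter S w = (L w).card := fun w hw =>
      counter_eq_card_aux S w (nodup_child hw hnd)
        (fun a ha => hsub (by
          simp only [L, List.mem_toFinset] at ha ⊢
          exact leafList_sub hw ha))
    rw [counter]
    have h1 : (cs.attach.map fun ⟨w, _⟩ =>
        if counter S w = (L w).card then counter S w else 0)
        = cs.attach.map fun ⟨w, _⟩ => (w.leafList).length := by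
      apply List.map_congr_left
      rintro ⟨w, hw⟩ -
      dsimp only
      rw [key w hw, if_pos rfl, L, List.toFinset_card_of_nodup (nodup_child hw hnd)]
    rw [h1, L, List.toFinset_card_of_nodup hnd, leafList, List.length_flatten,
      List.map_map]
    rfl
decreasing_by have := List.sizeOf_lt_of_mem ‹_›; simp only [node.sizeOf_spec]; omega

omit [DecidableEq α] in
lemma nodup_of_isVertex {v t : RTree α} (hv : IsVertex v t) :
    t.leafList.Nodup → v.leafList.Nodup := by
  induction hv with
  | refl => exact id
  | child hw _ ih => exact fun h => ih (nodup_child hw h)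

/-- if `L(v) ⊆ S` then `counter_S(v) = |L(v)|`, i.e. the counter attains its
maximum on vertices whose whole leaf set is contained in `S`. -/
theorem counter_eq_card_of_subset (t : RTree α) (hnd : t.leafList.Nodup)
    (S : Finset α) (v : RTree α) (hv : IsVertex v t) (hsub : L v ⊆ S) :
    counter S v = (L v).card :=
  counter_eq_card_aux S v (nodup_of_isVertex hv hnd) hsub

end RTree
end

section
/- Let t be a rooted tree with pairwise distinct leaf labels, S a set of labels, and u a vertex of t such that S ⊆ L(u) and for every child w of u either L(w) ∩ S = ∅ or L(w) ⊆ S. Then for every vertex v in the subtree rooted at u, counter_S(v) = |S ∩ L(v)|; in particular counter_S(u) = |S|. -/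
namespace RTree

variable {α : Type*} [DecidableEq α]

omit [DecidableEq α] in
theorem leafList_node (cs : List (RTree α)) :
    leafList (node cs) = (cs.map leafList).flatten := by
  rw [leafList]
  simp

theorem counter_node (S : Finset α) (cs : List (RTree α)) :
    counter S (node cs) =
      (cs.map fun w => if counter S w = (L w).card then counter S w else 0).sum := by
  rw [counter]
  simp

omit [DecidableEq α] in
theorem leafList_sublist_of_mem {w : RTree α} {cs : List (RTree α)} (hw : w ∈ cs) :
    w.leafList.Sublist (node cs).leafList := by
  rw [leafList_node]
  exact List.sublist_flatten_of_mem (List.mem_map_of_mem hw)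

omit [DecidableEq α] in
theorem IsVertex.leafList_sublist {v t : RTree α} (h : IsVertex v t) :
    v.leafList.Sublist t.leafList := by
  induction h with
  | refl => exact .refl _
  | child hw _ ih => exact ih.trans (leafList_sublist_of_mem hw)

theorem IsVertex.L_subset {v t : RTree α} (h : IsVertex v t) : L v ⊆ L t :=
  fun _ ha => List.mem_toFinset.mpr (h.leafList_sublist.subset (List.mem_toFinset.mp ha))

theorem card_inter_toFinset {l : List α} (hl : l.Nodup) (S : Finset α) :
    (S ∩ l.toFinset).card = (l.filter (· ∈ S)).length := by
  rw [← List.toFinset_card_of_nodup (hl.filter _)]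
  congr 1
  ext a
  simp [and_comm]

theorem card_inter_L_node {cs : List (RTree α)} (hnd : (node cs).leafList.Nodup)
    (S : Finset α) :
    (S ∩ L (node cs)).card = (cs.map fun w => (S ∩ L w).card).sum := by
  rw [L, card_inter_toFinset hnd, leafList_node, List.filter_flatten, List.length_flatten,
    List.map_map, List.map_map]
  congr 1
  exact List.map_congr_left fun w hw =>
    (card_inter_toFinset (hnd.sublist (leafList_sublist_of_mem hw)) S).symm

theorem inter_eq_empty_or_subset_of_subset {s t S : Finset α} (hst : s ⊆ t)
    (h : t ∩ S = ∅ ∨ t ⊆ S) : s ∩ S = ∅ ∨ s ⊆ S := by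
  refine h.imp (fun hdisj => ?_) hst.trans
  rw [← Finset.subset_empty, ← hdisj]
  exact Finset.inter_subset_inter_right hst

theorem counter_leaf_eq_card_inter (S : Finset α) (a : α) :
    counter S (leaf a) = (S ∩ L (leaf a)).card := by
  by_cases ha : a ∈ S <;> simp [counter, L, leafList, ha]

/-- A pure child contributes `|S ∩ L w|` to the sum defining `counter`, whether or not its
counter is complete. -/
theorem counter_node_eq_card_inter {S : Finset α} {cs : List (RTree α)}
    (hnd : (node cs).leafList.Nodup)
    (hcs : ∀ w ∈ cs, counter S w = (S ∩ L w).card ∧ (L w ∩ S = ∅ ∨ L w ⊆ S)) :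
    counter S (node cs) = (S ∩ L (node cs)).card := by
  rw [counter_node, card_inter_L_node hnd]
  congr 1
  refine List.map_congr_left fun w hw => ?_
  obtain ⟨hcount, hdisj | hsub⟩ := hcs w hw
  · have hzero : (S ∩ L w).card = 0 := by rw [Finset.inter_comm, hdisj, Finset.card_empty]
    simp [hcount, hzero]
  · simp [hcount, Finset.inter_eq_right.mpr hsub]

theorem counter_eq_card_inter_of_disjoint_or_subset {S : Finset α} :
    ∀ {v : RTree α}, v.leafList.Nodup → (L v ∩ S = ∅ ∨ L v ⊆ S) →
      counter S v = (S ∩ L v).card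
  | leaf a, _, _ => counter_leaf_eq_card_inter S a
  | node cs, hnd, hv => counter_node_eq_card_inter hnd fun w hw => by
      have hw' := inter_eq_empty_or_subset_of_subset (IsVertex.child hw (.refl w)).L_subset hv
      exact ⟨counter_eq_card_inter_of_disjoint_or_subset
        (hnd.sublist (leafList_sublist_of_mem hw)) hw', hw'⟩
termination_by v => sizeOf v
decreasing_by have := List.sizeOf_lt_of_mem hw; simp only [node.sizeOf_spec]; omega

theorem counter_eq_card_inter_of_forall_child {S : Finset α} {u : RTree α}
    (hnd : u.leafList.Nodup)
    (h : ∀ cs : List (RTree α), u = node cs → ∀ w ∈ cs, L w ∩ S = ∅ ∨ L w ⊆ S) :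
    counter S u = (S ∩ L u).card := by
  cases u with
  | leaf a => exact counter_leaf_eq_card_inter S a
  | node cs =>
    refine counter_node_eq_card_inter hnd fun w hw => ⟨?_, h cs rfl w hw⟩
    exact counter_eq_card_inter_of_disjoint_or_subset
      (hnd.sublist (leafList_sublist_of_mem hw)) (h cs rfl w hw)

/-- if `S ⊆ L(u)` and for every child `w` of `u` either `L(w) ∩ S = ∅` or
`L(w) ⊆ S`, then for every vertex `v` in the subtree rooted at `u`,
`counter_S(v) = |S ∩ L(v)|`; in particular `counter_S(u) = |S|`. -/
theorem counter_eq_of_compatible (t : RTree α) (hnd : t.leafList.Nodup)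
    (S : Finset α) (u : RTree α) (hu : IsVertex u t) (hS : S ⊆ L u)
    (hcompat : ∀ cs : List (RTree α), u = node cs → ∀ w ∈ cs, L w ∩ S = ∅ ∨ L w ⊆ S) :
    (∀ v : RTree α, IsVertex v u → counter S v = (S ∩ L v).card) ∧
      counter S u = S.card := by
  have hndu : u.leafList.Nodup := hnd.sublist hu.leafList_sublist
  have hcount : ∀ v : RTree α, IsVertex v u → counter S v = (S ∩ L v).card := by
    intro v hv
    cases hv with
    | refl => exact counter_eq_card_inter_of_forall_child hndu hcompat
    | child hw hvw =>
      exact counter_eq_card_inter_of_disjoint_or_subset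
        (hndu.sublist ((IsVertex.child hw hvw).leafList_sublist))
        (inter_eq_empty_or_subset_of_subset hvw.L_subset (hcompat _ rfl _ hw))
  refine ⟨hcount, ?_⟩
  rw [hcount u (.refl u), Finset.inter_eq_left.mpr hS]

end RTree
end
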